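/- Let n ≥ 2 and l₁, …, l_n be real numbers with 1 ≥ l₁ ≥ l₂ ≥ … ≥ l_n ≥ 0 and l₂ ≤ 1/2. Then there exists a closed spherical polygon in S³ with edge lengths π·l₁, …, π·l_n if and only if l₁ ≤ l₂ + … + l_n. -/

import Mathlib

/-!
Necessity is the triangle inequality for angles along the path `p₂ → p₃ → ⋯ → pₙ → p₁`.

For sufficiency, a chain of arcs of lengths `b₁, …, b_m ≤ π/2` joining two points at
distance `a` exists as soon as every `b_j ≤ a ≤ ∑ b_j`. Indeed, removing the last arc `c`
leaves the same problem for a diagonal of length `a' = min (min a S) (2π - a - c)`, where `S`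
is the sum of the remaining arcs, and the spherical triangle with sides `a`, `c`, `a'` exists
because its sides satisfy the spherical triangle inequalities. The third dimension leaves room
for its apex: a unit vector with prescribed inner products with two given unit vectors exists
as soon as the Gram matrix of the three is positive semidefinite.
-/

open Finset

/-- Geodesic distance on the unit sphere of `ℝ⁴`. -/
noncomputable def sphereDist4 (x y : EuclideanSpace ℝ (Fin 4)) : ℝ :=
  Real.arccos (inner ℝ x y)

open InnerProductGeometry Real Module
open scoped RealInnerProductSpace

section SphericalPolygon

variable {F : Type*} [NormedAddCommGroup F] [InnerProductSpace ℝ F]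

theorem angle_eq_arccos_inner_of_norm_eq_one {x y : F} (hx : ‖x‖ = 1) (hy : ‖y‖ = 1) :
    angle x y = arccos ⟪x, y⟫ := by
  rw [angle, hx, hy, one_mul, div_one]

theorem eq_of_angle_eq_zero_of_norm_eq_one {x y : F} (hx : ‖x‖ = 1) (hy : ‖y‖ = 1)
    (h : angle x y = 0) : x = y :=
  (inner_eq_one_iff_of_norm_eq_one hx hy).1 <| by
    rw [inner_eq_cos_angle_of_norm_eq_one hx hy, h, cos_zero]

theorem angle_le_sum_angle {m : ℕ} (q : Fin (m + 1) → F) (hq : q 0 ≠ 0) :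
    angle (q 0) (q (Fin.last m)) ≤ ∑ j : Fin m, angle (q j.castSucc) (q j.succ) := by
  induction m with
  | zero => simp [angle_self hq]
  | succ m ih =>
    calc angle (q 0) (q (Fin.last (m + 1)))
        ≤ angle (q 0) (q (Fin.last m).castSucc) +
            angle (q (Fin.last m).castSucc) (q (Fin.last m).succ) :=
          angle_le_angle_add_angle _ _ _
      _ ≤ _ := by
        rw [Fin.sum_univ_castSucc]
        gcongr
        exact ih (fun i => q i.castSucc) hq

theorem angle_le_sum_angle_of_cyclic {m : ℕ} (p : Fin (m + 1) → F) (hp : p 1 ≠ 0) :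
    angle (p 0) (p 1) ≤ ∑ j : Fin m, angle (p j.succ) (p (j.succ + 1)) := by
  have := angle_le_sum_angle (fun i => p (i + 1)) (by simpa using hp)
  simpa [Fin.coeSucc_eq_succ, angle_comm (p 1)] using this

theorem exists_norm_eq_one_inner_eq_zero (hF : 2 < finrank ℝ F) (u v : F) :
    ∃ e : F, ‖e‖ = 1 ∧ ⟪u, e⟫ = 0 ∧ ⟪v, e⟫ = 0 := by
  classical
  have : FiniteDimensional ℝ F := Module.finite_of_finrank_pos (by omega)
  set W := Submodule.span ℝ (({u, v} : Finset F) : Set F)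
  have hW : Wᗮ ≠ ⊥ := by
    rw [Ne, Submodule.orthogonal_eq_bot_iff]
    intro htop
    have h1 : finrank ℝ W ≤ 2 :=
      (finrank_span_finset_le_card {u, v}).trans Finset.card_le_two
    rw [htop, finrank_top] at h1
    omega
  have : Nontrivial Wᗮ := Submodule.nontrivial_iff_ne_bot.2 hW
  obtain ⟨e, he⟩ := exists_norm_eq Wᗮ zero_le_one
  exact ⟨e, by simpa using he,
    Submodule.inner_right_of_mem_orthogonal (Submodule.subset_span (by simp)) e.2,
    Submodule.inner_right_of_mem_orthogonal (Submodule.subset_span (by simp)) e.2⟩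

theorem exists_norm_eq_one_inner_eq_inner_eq (hF : 2 < finrank ℝ F) {u v : F} (hu : ‖u‖ = 1)
    (hv : ‖v‖ = 1) {B C : ℝ} (hB : B ^ 2 ≤ 1)
    (hgram : (C - ⟪u, v⟫ * B) ^ 2 ≤ (1 - ⟪u, v⟫ ^ 2) * (1 - B ^ 2)) :
    ∃ w : F, ‖w‖ = 1 ∧ ⟪u, w⟫ = B ∧ ⟪v, w⟫ = C := by
  obtain ⟨e, he, hue, hve⟩ := exists_norm_eq_one_inner_eq_zero hF u v
  set A := ⟪u, v⟫
  have hA : 0 ≤ 1 - A ^ 2 := by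
    have := abs_real_inner_le_norm u v
    rw [hu, hv, one_mul] at this
    nlinarith [abs_nonneg A, sq_abs A]
  -- When `A ^ 2 = 1` the Gram condition forces `C = A * B`, so the junk value `y = 0` still works.
  set y := (C - A * B) / (1 - A ^ 2)
  have hy : y * (1 - A ^ 2) = C - A * B := div_mul_cancel_of_imp fun h => by
    rw [h, zero_mul] at hgram
    exact pow_eq_zero_iff (n := 2) (by norm_num) |>.1 (le_antisymm hgram (sq_nonneg _))
  have hz : 0 ≤ 1 - B ^ 2 - y * (C - A * B) := by
    have : y * (C - A * B) ≤ 1 - B ^ 2 := by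
      rw [div_mul_eq_mul_div, ← sq]
      exact div_le_of_le_mul₀ hA (by linarith) (by linarith)
    linarith
  clear_value y
  have huu : ⟪u, u⟫ = 1 := by rw [real_inner_self_eq_norm_sq, hu, one_pow]
  have hvv : ⟪v, v⟫ = 1 := by rw [real_inner_self_eq_norm_sq, hv, one_pow]
  have hee : ⟪e, e⟫ = 1 := by rw [real_inner_self_eq_norm_sq, he, one_pow]
  refine ⟨B • u + y • (v - A • u) + √(1 - B ^ 2 - y * (C - A * B)) • e, ?_, ?_, ?_⟩
  · rw [← pow_eq_one_iff_of_nonneg (norm_nonneg _) two_ne_zero, ← real_inner_self_eq_norm_sq]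
    simp only [inner_add_left, inner_add_right, inner_sub_left, inner_sub_right,
      real_inner_smul_left, real_inner_smul_right, huu, hvv, hee, hue, hve, real_inner_comm u v,
      real_inner_comm u e, real_inner_comm v e]
    linear_combination Real.mul_self_sqrt hz + y * hy
  · simp only [inner_add_right, inner_sub_right, real_inner_smul_right, huu, hue]
    ring
  · simp only [inner_add_right, inner_sub_right, real_inner_smul_right, hvv, hve,
      real_inner_comm u v]
    linear_combination hy

theorem exists_angle_eq_angle_eq (hF : 2 < finrank ℝ F) {u v : F} (hu : ‖u‖ = 1)
    (hv : ‖v‖ = 1) {β γ : ℝ} (hlow : |angle u v - β| ≤ γ) (hup : γ ≤ angle u v + β)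
    (hsum : angle u v + β + γ ≤ 2 * π) :
    ∃ w : F, ‖w‖ = 1 ∧ angle u w = β ∧ angle v w = γ := by
  set a := angle u v
  obtain ⟨hlow₁, hlow₂⟩ := abs_sub_le_iff.1 hlow
  have ha0 := angle_nonneg u v
  have haπ := angle_le_pi u v
  have hβ0 : 0 ≤ β := by linarith
  have hβπ : β ≤ π := by linarith
  have hγ0 : 0 ≤ γ := by linarith
  have hγπ : γ ≤ π := by linarith
  have hγ_le : cos γ ≤ cos (a - β) := by
    rw [← cos_abs (a - β)]
    exact cos_le_cos_of_nonneg_of_le_pi (abs_nonneg _) hγπ hlow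
  have hγ_ge : cos (a + β) ≤ cos γ := by
    rcases le_total (a + β) π with h | h
    · exact cos_le_cos_of_nonneg_of_le_pi hγ0 h hup
    · rw [← cos_two_pi_sub]
      exact cos_le_cos_of_nonneg_of_le_pi hγ0 (by linarith) (by linarith)
  rw [cos_add] at hγ_ge
  rw [cos_sub] at hγ_le
  have hsa := sin_nonneg_of_nonneg_of_le_pi ha0 haπ
  have hsb := sin_nonneg_of_nonneg_of_le_pi hβ0 hβπ
  have hgram : (cos γ - cos a * cos β) ^ 2 ≤ (1 - cos a ^ 2) * (1 - cos β ^ 2) := by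
    rw [← sin_sq, ← sin_sq, ← mul_pow]
    exact sq_le_sq' (by linarith) (by linarith)
  rw [← inner_eq_cos_angle_of_norm_eq_one hu hv] at hgram
  obtain ⟨w, hw, huw, hvw⟩ :=
    exists_norm_eq_one_inner_eq_inner_eq hF hu hv (cos_sq_le_one β) hgram
  refine ⟨w, hw, ?_, ?_⟩
  · rw [angle_eq_arccos_inner_of_norm_eq_one hu hw, huw, arccos_cos hβ0 hβπ]
  · rw [angle_eq_arccos_inner_of_norm_eq_one hv hw, hvw, arccos_cos hγ0 hγπ]

theorem exists_chain_angle_eq (hF : 2 < finrank ℝ F) {m : ℕ} (b : Fin m → ℝ)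
    (hb0 : ∀ j, 0 ≤ b j) (hbπ : ∀ j, b j ≤ π / 2) {u v : F} (hu : ‖u‖ = 1) (hv : ‖v‖ = 1)
    (hle : ∀ j, b j ≤ angle u v) (hsum : angle u v ≤ ∑ j, b j) :
    ∃ q : Fin (m + 1) → F, (∀ k, ‖q k‖ = 1) ∧ q 0 = u ∧ q (Fin.last m) = v ∧
      ∀ j, angle (q j.castSucc) (q j.succ) = b j := by
  induction m generalizing v with
  | zero =>
    have huv : angle u v = 0 := le_antisymm (by simpa using hsum) (angle_nonneg u v)
    exact ⟨fun _ => u, fun _ => hu, rfl, eq_of_angle_eq_zero_of_norm_eq_one hu hv huv,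
      finZeroElim⟩
  | succ m ih =>
    set a := angle u v
    set c := b (Fin.last m)
    set S := ∑ j : Fin m, b j.castSucc
    rw [Fin.sum_univ_castSucc] at hsum
    have ha := angle_le_pi u v
    have hS : ∀ j, b (Fin.castSucc j) ≤ S := fun j =>
      single_le_sum (fun j _ => hb0 (Fin.castSucc j)) (mem_univ j)
    have hS0 : 0 ≤ S := sum_nonneg fun j _ => hb0 _
    have hc0 : 0 ≤ c := hb0 _
    have hcπ : c ≤ π / 2 := hbπ _
    have hca : c ≤ a := hle _
    -- The diagonal from `u` to the second-to-last vertex: `a' ≤ min a S` keeps the remaining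
    -- chain admissible, `a' ≤ 2π - a - c` makes the triangle with sides `a`, `c`, `a'` exist.
    set a' := min (min a S) (2 * π - a - c)
    have ha'_ge : a - c ≤ a' ∧ 0 ≤ a' :=
      ⟨le_min (le_min (by linarith) (by linarith)) (by linarith),
        le_min (le_min (by linarith) hS0) (by linarith)⟩
    obtain ⟨w, hw, hvw, huw⟩ := exists_angle_eq_angle_eq hF hv hu (β := c) (γ := a')
      (by rw [angle_comm, abs_sub_le_iff]; constructor <;> linarith)
      (by rw [angle_comm]; linarith [min_le_left (min a S) (2 * π - a - c), min_le_left a S])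
      (by rw [angle_comm]; linarith [min_le_right (min a S) (2 * π - a - c)])
    obtain ⟨q, hq, hq0, hqw, hqb⟩ := ih (fun j => b j.castSucc) (fun j => hb0 _)
      (fun j => hbπ _) hw
      (fun j => by
        rw [huw]
        exact le_min (le_min (hle _) (hS j)) (by linarith [hbπ (Fin.castSucc j)]))
      (by rw [huw]; exact (min_le_left _ _).trans (min_le_right _ _))
    refine ⟨Fin.snoc q v, Fin.lastCases (by simpa using hv) (by simpa using hq), ?_, by simp,
      ?_⟩
    · rw [← Fin.castSucc_zero, Fin.snoc_castSucc, hq0]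
    · refine Fin.lastCases ?_ fun j => ?_
      · simp [hqw, angle_comm w v, hvw, c]
      · rw [Fin.succ_castSucc, Fin.snoc_castSucc, Fin.snoc_castSucc, hqb j]

theorem exists_cyclic_angle_eq (hF : 2 < finrank ℝ F) {m : ℕ} {a : ℝ} (b : Fin m → ℝ)
    (ha0 : 0 ≤ a) (haπ : a ≤ π) (hb0 : ∀ j, 0 ≤ b j) (hbπ : ∀ j, b j ≤ π / 2)
    (hle : ∀ j, b j ≤ a) (hsum : a ≤ ∑ j, b j) :
    ∃ p : Fin (m + 1) → F, (∀ k, ‖p k‖ = 1) ∧ angle (p 0) (p 1) = a ∧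
      ∀ j, angle (p j.succ) (p (j.succ + 1)) = b j := by
  have : Nontrivial F := Module.nontrivial_of_finrank_pos (R := ℝ) (by omega)
  obtain ⟨u, hu⟩ := exists_norm_eq F zero_le_one
  have hu0 : u ≠ 0 := norm_ne_zero_iff.1 (by rw [hu]; exact one_ne_zero)
  obtain ⟨v, hv, huv, -⟩ := exists_angle_eq_angle_eq hF hu hu (β := a) (γ := a)
    (by simp [angle_self hu0, abs_of_nonneg ha0]) (by simp [angle_self hu0])
    (by rw [angle_self hu0]; linarith)
  obtain ⟨q, hq, hq0, hqv, hqb⟩ :=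
    exists_chain_angle_eq hF b hb0 hbπ hu hv (huv ▸ hle) (huv ▸ hsum)
  refine ⟨fun k => q (k - 1), fun k => hq _, ?_, fun j => ?_⟩
  · show angle (q (0 - 1)) (q (1 - 1)) = a
    rw [sub_self, hq0, ← Fin.last_add_one, add_sub_cancel_right, hqv, angle_comm, huv]
  · simpa [← Fin.coeSucc_eq_succ] using hqb j

end SphericalPolygon

theorem sphereDist4_eq_angle {x y : EuclideanSpace ℝ (Fin 4)} (hx : ‖x‖ = 1)
    (hy : ‖y‖ = 1) : sphereDist4 x y = angle x y :=
  (angle_eq_arccos_inner_of_norm_eq_one hx hy).symm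

/-- For `n ≥ 2` and `1 ≥ l₁ ≥ … ≥ l_n ≥ 0` with `l₂ ≤ 1/2`, a closed spherical polygon in
`S³` with edge lengths `π·l₁, …, π·l_n` exists iff `l₁ ≤ l₂ + … + l_n`. -/
theorem spherical_polygon_exists_iff_of_reduced (n : ℕ) [NeZero n] (hn : 2 ≤ n)
    (l : Fin n → ℝ)
    (hl : ∀ i, l i ∈ Set.Icc (0 : ℝ) 1)
    (hmono : ∀ i j : Fin n, i ≤ j → l j ≤ l i)
    (hl2 : l ⟨1, by omega⟩ ≤ 1 / 2) :
    (∃ p : Fin n → EuclideanSpace ℝ (Fin 4),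
        (∀ k, ‖p k‖ = 1) ∧
        ∀ k : Fin n, sphereDist4 (p k) (p (k + 1)) = Real.pi * l k) ↔
      l ⟨0, by omega⟩ ≤ ∑ i ∈ univ.erase (⟨0, by omega⟩ : Fin n), l i := by
  obtain ⟨m, rfl⟩ : ∃ m, n = m + 1 := ⟨n - 1, by omega⟩
  have hsum : ∑ i ∈ univ.erase 0, l i = ∑ j : Fin m, l j.succ := by
    rw [sum_erase_eq_sub (mem_univ 0), Fin.sum_univ_succ, add_sub_cancel_left]
  have hedges : ∀ p : Fin (m + 1) → EuclideanSpace ℝ (Fin 4), (∀ k, ‖p k‖ = 1) →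
      ((∀ k, sphereDist4 (p k) (p (k + 1)) = π * l k) ↔ angle (p 0) (p 1) = π * l 0 ∧
        ∀ j : Fin m, angle (p j.succ) (p (j.succ + 1)) = π * l j.succ) :=
    fun p hp => by simp only [Fin.forall_fin_succ, sphereDist4_eq_angle (hp _) (hp _), zero_add]
  simp only [Fin.zero_eta, hsum]
  constructor
  · rintro ⟨p, hp, hpl⟩
    obtain ⟨h0, hsucc⟩ := (hedges p hp).1 hpl
    have := angle_le_sum_angle_of_cyclic p (norm_ne_zero_iff.1 (by rw [hp]; exact one_ne_zero))
    rw [h0, sum_congr rfl fun j _ => hsucc j, ← mul_sum] at this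
    exact le_of_mul_le_mul_left this pi_pos
  · intro h
    have hπ := pi_pos.le
    have hl1 : ∀ j : Fin m, l j.succ ≤ 1 / 2 := fun j =>
      (hmono _ j.succ (Fin.le_def.2 (by simp))).trans hl2
    obtain ⟨p, hp, h0, hsucc⟩ := exists_cyclic_angle_eq (F := EuclideanSpace ℝ (Fin 4))
      (by simp) (fun j => π * l j.succ) (mul_nonneg hπ (hl 0).1) (mul_le_of_le_one_right hπ (hl 0).2)
      (fun j => mul_nonneg hπ (hl _).1)
      (fun j => by linarith [mul_le_mul_of_nonneg_left (hl1 j) hπ])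
      (fun j => mul_le_mul_of_nonneg_left (hmono 0 j.succ (Fin.zero_le _)) hπ)
      (by rw [← mul_sum]; exact mul_le_mul_of_nonneg_left h hπ)
    exact ⟨p, hp, (hedges p hp).2 ⟨h0, hsucc⟩⟩
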